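/- arXiv:2406.01093 — 3 statements merged into one kernel-verified Lean document; each statement's English description precedes it below -/
import Mathlib

section
/- Let A be a bialgebra over a commutative ring R and let k ≥ 1. Then P^k ⊆ ker(Δ̄^k): the k-fold iterated reduced comultiplication Δ̄^k vanishes on every product of at most k primitive elements of A. -/
open scoped TensorProduct

universe u v

/-- The iterated tensor power carrier: `Tpow R A k` is `A^{⊗(k+1)}`, nested on the left,
so that `Tpow R A 0 = A` and `Tpow R A (k+1) = Tpow R A k ⊗[R] A`. -/
noncomputable def Tpow (R : Type u) [CommRing R] (A : Type v) [AddCommGroup A] [Module R A] :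
    ℕ → ModuleCat.{v} R
  | 0 => ModuleCat.of R A
  | n + 1 => ModuleCat.of R ((Tpow R A n) ⊗[R] A)

/-- The reduced comultiplication `Δ̄ = Δ - (· ⊗ 1) - (1 ⊗ ·)` as an `R`-linear map. -/
noncomputable def reducedComulHom (R : Type u) (A : Type v)
    [CommRing R] [Ring A] [Bialgebra R A] : A →ₗ[R] A ⊗[R] A :=
  Coalgebra.comul - ((TensorProduct.mk R A A).flip 1) - (TensorProduct.mk R A A 1)

/-- The iterated reduced comultiplication `Δ̄^k : A → A^{⊗(k+1)}`, with `Δ̄^0 = id`,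
`Δ̄^1 = Δ̄` and `Δ̄^k = (Δ̄^{k-1} ⊗ id) ∘ Δ̄`. -/
noncomputable def iterRedComul (R : Type u) (A : Type v) [CommRing R] [Ring A] [Bialgebra R A] :
    (k : ℕ) → A →ₗ[R] Tpow R A k
  | 0 => LinearMap.id
  | k + 1 =>
      (TensorProduct.map (iterRedComul R A k) (LinearMap.id (R := R) (M := A))).comp
        (reducedComulHom R A)

/-- An element of a bialgebra is primitive if `Δ(x) = x ⊗ 1 + 1 ⊗ x`. -/
def IsPrimitiveElem (R : Type u) {A : Type v} [CommRing R] [Ring A] [Bialgebra R A]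
    (x : A) : Prop :=
  Coalgebra.comul (R := R) x = x ⊗ₜ[R] (1 : A) + (1 : A) ⊗ₜ[R] x

/-- `Pfilt R A k` is the `R`-submodule of `A` spanned by all products `x₁ ⋯ x_j` of
`1 ≤ j ≤ k` primitive elements: the `k`-th step of the primitive filtration. -/
def Pfilt (R : Type u) (A : Type v) [CommRing R] [Ring A] [Bialgebra R A] (k : ℕ) :
    Submodule R A :=
  Submodule.span R
    {z : A | ∃ l : List A, l ≠ [] ∧ l.length ≤ k ∧ (∀ x ∈ l, IsPrimitiveElem R x) ∧ z = l.prod}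

/-! Since `Δ` is multiplicative and `Δ x = x ⊗ 1 + 1 ⊗ x` for primitive `x`, one gets
`Δ̄ (x y) = (x ⊗ 1 + 1 ⊗ x) Δ̄ y + x ⊗ y + y ⊗ x`, and induction on the length of a product of
primitives shows `Δ̄ (P^(n+1)) ⊆ P^n ⊗ A`, read as the image of `P^n ⊗ A → A ⊗ A` (which need
not be injective). As `Δ̄^(k+1) = (Δ̄^k ⊗ id) ∘ Δ̄`, induction on `k`, starting
from `P^0 = 0`, gives `Δ̄^k (P^k) = 0`. -/

open TensorProduct LinearMap

section RangeSubtypeRTensor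

variable {R : Type*} [CommRing R]

section Module

variable {M N M' : Type*} [AddCommGroup M] [Module R M] [AddCommGroup N] [Module R N]
  [AddCommGroup M'] [Module R M'] {P Q : Submodule R M}

lemma tmul_mem_range_subtype_rTensor {y : M} (hy : y ∈ P) (z : N) :
    y ⊗ₜ[R] z ∈ range (P.subtype.rTensor N) :=
  ⟨⟨y, hy⟩ ⊗ₜ z, rfl⟩

lemma range_subtype_rTensor_mono (h : P ≤ Q) :
    range (P.subtype.rTensor N) ≤ range (Q.subtype.rTensor N) := by
  rw [← Submodule.subtype_comp_inclusion P Q h, rTensor_comp]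
  exact range_comp_le_range _ _

lemma range_subtype_rTensor_le_ker {f : M →ₗ[R] M'} (h : P ≤ ker f) :
    range (P.subtype.rTensor N) ≤ ker (f.rTensor N) := by
  rintro _ ⟨t, rfl⟩
  have hf : f ∘ₗ P.subtype = 0 := LinearMap.ext fun y => h y.2
  rw [mem_ker, ← comp_apply, ← rTensor_comp, hf, rTensor_zero, LinearMap.zero_apply]

end Module

lemma tmul_mul_mem_range_subtype_rTensor {A B : Type*} [Ring A] [Algebra R A] [Ring B]
    [Algebra R B] {P Q : Submodule R A} {a : A} (ha : ∀ y ∈ P, a * y ∈ Q) (b : B)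
    {t : A ⊗[R] B} (ht : t ∈ range (P.subtype.rTensor B)) :
    (a ⊗ₜ b) * t ∈ range (Q.subtype.rTensor B) := by
  obtain ⟨s, rfl⟩ := ht
  induction s using TensorProduct.induction_on with
  | zero => simp
  | tmul y c =>
    simpa using tmul_mem_range_subtype_rTensor (ha y y.2) (b * c)
  | add s s' hs hs' =>
    rw [map_add, mul_add]
    exact add_mem hs hs'

end RangeSubtypeRTensor

section Bialgebra

variable {R : Type u} {A : Type v} [CommRing R] [Ring A] [Bialgebra R A]

lemma reducedComulHom_apply (x : A) :
    reducedComulHom R A x = Coalgebra.comul x - x ⊗ₜ[R] (1 : A) - (1 : A) ⊗ₜ[R] x :=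
  rfl

lemma reducedComulHom_eq_zero_of_isPrimitiveElem {x : A} (hx : IsPrimitiveElem R x) :
    reducedComulHom R A x = 0 := by
  rw [reducedComulHom_apply, hx]
  abel

lemma reducedComulHom_mul_of_isPrimitiveElem {x : A} (hx : IsPrimitiveElem R x) (y : A) :
    reducedComulHom R A (x * y) =
      (x ⊗ₜ[R] (1 : A) + (1 : A) ⊗ₜ[R] x) * reducedComulHom R A y + x ⊗ₜ[R] y + y ⊗ₜ[R] x := by
  have hy : Coalgebra.comul (R := R) y =
      reducedComulHom R A y + y ⊗ₜ[R] (1 : A) + (1 : A) ⊗ₜ[R] y := by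
    rw [reducedComulHom_apply]
    abel
  rw [reducedComulHom_apply, Bialgebra.comul_mul, hx, hy]
  simp only [mul_add, add_mul, Algebra.TensorProduct.tmul_mul_tmul, one_mul, mul_one]
  abel

lemma iterRedComul_succ_apply (k : ℕ) (x : A) :
    iterRedComul R A (k + 1) x = (iterRedComul R A k).rTensor A (reducedComulHom R A x) :=
  rfl

lemma Pfilt_zero : Pfilt R A 0 = ⊥ := by
  refine Submodule.span_eq_bot.2 ?_
  rintro _ ⟨l, hl, hlen, -, -⟩
  exact absurd (List.length_eq_zero_iff.1 (Nat.le_zero.1 hlen)) hl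

lemma Pfilt_mono : Monotone (Pfilt R A) := fun _ _ h =>
  Submodule.span_mono fun _ ⟨l, hl, hlen, hprim, hz⟩ => ⟨l, hl, hlen.trans h, hprim, hz⟩

lemma list_prod_mem_Pfilt {l : List A} (hl : l ≠ []) (hprim : ∀ x ∈ l, IsPrimitiveElem R x)
    {n : ℕ} (hlen : l.length ≤ n) : l.prod ∈ Pfilt R A n :=
  Submodule.subset_span ⟨l, hl, hlen, hprim, rfl⟩

lemma mul_mem_Pfilt_succ_of_isPrimitiveElem {x : A} (hx : IsPrimitiveElem R x) {n : ℕ} {y : A}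
    (hy : y ∈ Pfilt R A n) : x * y ∈ Pfilt R A (n + 1) := by
  suffices Pfilt R A n ≤ (Pfilt R A (n + 1)).comap (mulLeft R x) from this hy
  refine Submodule.span_le.2 ?_
  rintro _ ⟨l, -, hlen, hprim, rfl⟩
  refine list_prod_mem_Pfilt (l := x :: l) (List.cons_ne_nil _ _) ?_ (by simpa using hlen)
  exact List.forall_mem_cons.2 ⟨hx, hprim⟩

lemma reducedComulHom_cons_prod_mem (x : A) (l : List A)
    (hprim : ∀ y ∈ x :: l, IsPrimitiveElem R y) :
    reducedComulHom R A (x :: l).prod ∈ range ((Pfilt R A l.length).subtype.rTensor A) := by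
  induction l generalizing x with
  | nil => simp [reducedComulHom_eq_zero_of_isPrimitiveElem (hprim x List.mem_cons_self)]
  | cons y l ih =>
    obtain ⟨hx, hprim'⟩ := List.forall_mem_cons.1 hprim
    have hp : (y :: l).prod ∈ Pfilt R A (y :: l).length :=
      list_prod_mem_Pfilt (List.cons_ne_nil _ _) hprim' le_rfl
    have hx1 : x ∈ Pfilt R A (y :: l).length := by
      simpa using list_prod_mem_Pfilt (l := [x]) (List.cons_ne_nil _ _) (by simpa using hx)
        (by simp)
    have hΔ := ih y hprim'
    rw [List.prod_cons, reducedComulHom_mul_of_isPrimitiveElem hx, add_mul]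
    refine add_mem (add_mem (add_mem ?_ ?_) (tmul_mem_range_subtype_rTensor hx1 _))
      (tmul_mem_range_subtype_rTensor hp _)
    · exact tmul_mul_mem_range_subtype_rTensor
        (fun _ => mul_mem_Pfilt_succ_of_isPrimitiveElem hx) _ hΔ
    · exact tmul_mul_mem_range_subtype_rTensor
        (fun z hz => by simpa using Pfilt_mono (Nat.le_succ _) hz) _ hΔ

lemma reducedComulHom_mem_of_mem_Pfilt_succ {n : ℕ} {y : A} (hy : y ∈ Pfilt R A (n + 1)) :
    reducedComulHom R A y ∈ range ((Pfilt R A n).subtype.rTensor A) := by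
  suffices Pfilt R A (n + 1) ≤
      (range ((Pfilt R A n).subtype.rTensor A)).comap (reducedComulHom R A) from this hy
  refine Submodule.span_le.2 ?_
  rintro _ ⟨_ | ⟨x, l⟩, hl, hlen, hprim, rfl⟩
  · exact absurd rfl hl
  · exact range_subtype_rTensor_mono (Pfilt_mono (by simpa using hlen))
      (reducedComulHom_cons_prod_mem x l hprim)

lemma Pfilt_le_ker_iterRedComul (k : ℕ) : Pfilt R A k ≤ ker (iterRedComul R A k) := by
  induction k with
  | zero => simp [Pfilt_zero]
  | succ k ih =>
    intro y hy
    rw [mem_ker, iterRedComul_succ_apply]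
    exact range_subtype_rTensor_le_ker ih (reducedComulHom_mem_of_mem_Pfilt_succ hy)

end Bialgebra

theorem stmt3_general {R : Type u} {A : Type v} [CommRing R] [Ring A] [Bialgebra R A]
    (k : ℕ) (x : A) (hx : x ∈ Pfilt R A k) :
    iterRedComul R A k x = 0 :=
  Pfilt_le_ker_iterRedComul k hx

/-- `P^k ⊆ ker(Δ̄^k)`: the `k`-fold iterated reduced comultiplication vanishes
on every product of at most `k` primitive elements. -/
theorem stmt3 {R : Type u} {A : Type v} [CommRing R] [Ring A] [Bialgebra R A]
    (k : ℕ) (hk : 1 ≤ k) (x : A) (hx : x ∈ Pfilt R A k) :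
    iterRedComul R A k x = 0 :=
  stmt3_general k x hx
end

section
/- Let A be a bialgebra over a commutative ring R, let k ≥ 1, and let x_1, …, x_{k+1} be primitive elements of A. Then Δ̄^k(x_1 ⋯ x_{k+1}) = Σ_{σ ∈ S_{k+1}} x_{σ(1)} ⊗ x_{σ(2)} ⊗ ⋯ ⊗ x_{σ(k+1)} in A^{⊗(k+1)}, where the sum is over all permutations σ of {1, …, k+1}. -/
open scoped TensorProduct

universe u v

/-- The pure tensor `x 0 ⊗ x 1 ⊗ ⋯ ⊗ x k` (nested on the left) in `Tpow R A k`. -/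
noncomputable def tensorOfFn (R : Type u) [CommRing R] (A : Type v)
    [AddCommGroup A] [Module R A] : (k : ℕ) → (Fin (k + 1) → A) → Tpow R A k
  | 0, x => x 0
  | k + 1, x => (tensorOfFn R A k fun i => x i.castSucc) ⊗ₜ[R] x (Fin.last (k + 1))

/-!
For primitive `xᵢ`, multiplicativity of `Δ` gives `Δ(x₁ ⋯ xₙ) = Σ ∏ l₁ ⊗ ∏ l₂` over the unshuffles
`(l₁, l₂)` of `[x₁, …, xₙ]`, so `Δ̄` keeps exactly the unshuffles with both parts nonempty. By
induction, `Δ̄^k` kills every product of at most `k` primitives. In `Δ̄^{k+1}(x₁ ⋯ x_{k+2})` only the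
unshuffles whose right part is a single `xⱼ` survive, which gives
`Σⱼ Δ̄^k(∏_{i ≠ j} xᵢ) ⊗ xⱼ`; by induction on `k`, this is the sum over permutations `τ` of
`{1, …, k+2}`, grouped according to `τ(k+2) = j`.
-/

namespace List

variable {α M : Type*} [AddCommMonoid M]

def unshuffles : List α → List (List α × List α)
  | [] => [([], [])]
  | a :: l => (l.unshuffles.map fun p => (a :: p.1, p.2)) ++
      (l.unshuffles.map fun p => (p.1, a :: p.2))

@[simp]
theorem unshuffles_nil : ([] : List α).unshuffles = [([], [])] := rfl

@[simp]
theorem unshuffles_cons (a : α) (l : List α) :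
    (a :: l).unshuffles = (l.unshuffles.map fun p => (a :: p.1, p.2)) ++
      (l.unshuffles.map fun p => (p.1, a :: p.2)) := rfl

theorem length_add_length_of_mem_unshuffles {l : List α} {p : List α × List α}
    (hp : p ∈ l.unshuffles) : p.1.length + p.2.length = l.length := by
  induction l generalizing p with
  | nil => simp_all
  | cons a l ih =>
    simp only [unshuffles_cons, mem_append, mem_map] at hp
    rcases hp with ⟨q, hq, rfl⟩ | ⟨q, hq, rfl⟩ <;> simp [← ih hq] <;> omega

theorem fst_sublist_of_mem_unshuffles {l : List α} {p : List α × List α}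
    (hp : p ∈ l.unshuffles) : p.1 <+ l := by
  induction l generalizing p with
  | nil => simp_all
  | cons a l ih =>
    simp only [unshuffles_cons, mem_append, mem_map] at hp
    rcases hp with ⟨q, hq, rfl⟩ | ⟨q, hq, rfl⟩
    · exact (ih hq).cons_cons a
    · exact (ih hq).cons a

theorem sum_unshuffles_ite_snd_eq_nil (l : List α) (f : List α × List α → M) :
    (l.unshuffles.map fun p => if p.2 = [] then f p else 0).sum = f (l, []) := by
  induction l generalizing f with
  | nil => simp
  | cons a l ih => simp [Function.comp_def, ih]

theorem sum_unshuffles_ite_fst_eq_nil (l : List α) (f : List α × List α → M) :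
    (l.unshuffles.map fun p => if p.1 = [] then f p else 0).sum = f ([], l) := by
  induction l generalizing f with
  | nil => simp
  | cons a l ih => simp [Function.comp_def, ih]

theorem sum_unshuffles_ofFn_ite_length_snd_eq_one {n : ℕ} (x : Fin (n + 1) → α)
    (f : List α × List α → M) :
    ((ofFn x).unshuffles.map fun p => if p.2.length = 1 then f p else 0).sum =
      ∑ j, f (ofFn (x ∘ j.succAbove), [x j]) := by
  induction n generalizing f with
  | zero => simp
  | succ n ih =>
    rw [ofFn_succ, Fin.sum_univ_succ]
    simp only [unshuffles_cons, map_append, map_map, sum_append, Function.comp_def,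
      length_cons, Nat.add_eq_right, length_eq_zero_iff, sum_unshuffles_ite_snd_eq_nil,
      ih (fun i => x i.succ) (fun p => f (x 0 :: p.1, p.2))]
    simp [add_comm, ofFn_succ, Fin.succ_succAbove_succ]

end List

namespace Equiv.Perm

def finSnoc {n : ℕ} (j : Fin (n + 1)) (σ : Perm (Fin n)) : Perm (Fin (n + 1)) :=
  (finSuccEquivLast.trans (optionCongr σ)).trans (finSuccEquiv' j).symm

@[simp]
theorem finSnoc_castSucc {n : ℕ} (j : Fin (n + 1)) (σ : Perm (Fin n)) (i : Fin n) :
    finSnoc j σ i.castSucc = j.succAbove (σ i) := by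
  simp [finSnoc]

@[simp]
theorem finSnoc_last {n : ℕ} (j : Fin (n + 1)) (σ : Perm (Fin n)) :
    finSnoc j σ (Fin.last n) = j := by
  simp [finSnoc]

theorem finSnoc_bijective {n : ℕ} :
    Function.Bijective fun p : Fin (n + 1) × Perm (Fin n) => finSnoc p.1 p.2 := by
  refine (Fintype.bijective_iff_injective_and_card _).2 ⟨?_, ?_⟩
  · rintro ⟨j, σ⟩ ⟨j', σ'⟩ h
    dsimp only at h ⊢
    obtain rfl : j = j' := by simpa using DFunLike.congr_fun h (Fin.last n)
    obtain rfl : σ = σ' := Equiv.ext fun i => by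
      simpa using DFunLike.congr_fun h i.castSucc
    rfl
  · simp [Fintype.card_perm, Nat.factorial_succ]

theorem sum_eq_sum_finSnoc {n : ℕ} {M : Type*} [AddCommMonoid M] (f : Perm (Fin (n + 1)) → M) :
    ∑ τ, f τ = ∑ j, ∑ σ, f (finSnoc j σ) := by
  rw [← Fintype.sum_prod_type']
  exact (Fintype.sum_bijective _ finSnoc_bijective _ _ fun _ => rfl).symm

end Equiv.Perm

section Bialgebra

variable {R : Type u} {A : Type v} [CommRing R] [Ring A] [Bialgebra R A]

theorem comul_list_prod_of_isPrimitiveElem {l : List A} (hl : ∀ a ∈ l, IsPrimitiveElem R a) :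
    Coalgebra.comul (R := R) l.prod =
      (l.unshuffles.map fun p => p.1.prod ⊗ₜ[R] p.2.prod).sum := by
  induction l with
  | nil => simp [Algebra.TensorProduct.one_def]
  | cons a l ih =>
    rw [List.prod_cons, Bialgebra.comul_mul, hl a List.mem_cons_self,
      ih fun b hb => hl b (List.mem_cons_of_mem a hb), add_mul,
      ← List.sum_map_mul_left, ← List.sum_map_mul_left]
    simp [Function.comp_def, Algebra.TensorProduct.tmul_mul_tmul]

theorem reducedComulHom_list_prod {l : List A} (hne : l ≠ [])
    (hl : ∀ a ∈ l, IsPrimitiveElem R a) :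
    reducedComulHom R A l.prod = (l.unshuffles.map fun p =>
      if p.1 ≠ [] ∧ p.2 ≠ [] then p.1.prod ⊗ₜ[R] p.2.prod else 0).sum := by
  set t : List A × List A → A ⊗[R] A := fun p => p.1.prod ⊗ₜ[R] p.2.prod
  have hsplit : ∀ p ∈ l.unshuffles, t p = ((if p.2 = [] then t p else 0) +
      (if p.1 = [] then t p else 0)) + (if p.1 ≠ [] ∧ p.2 ≠ [] then t p else 0) := by
    intro p hp
    have : ¬(p.1 = [] ∧ p.2 = []) := fun h => hne <| List.length_eq_zero_iff.1 <| by
      simp [← List.length_add_length_of_mem_unshuffles hp, h]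
    by_cases h1 : p.1 = [] <;> by_cases h2 : p.2 = [] <;> simp_all
  have hcomul := comul_list_prod_of_isPrimitiveElem hl
  rw [List.map_congr_left hsplit, List.sum_map_add, List.sum_map_add,
    List.sum_unshuffles_ite_snd_eq_nil, List.sum_unshuffles_ite_fst_eq_nil] at hcomul
  simp only [reducedComulHom, LinearMap.sub_apply, hcomul, t]
  simp only [List.prod_nil, LinearMap.flip_apply, TensorProduct.mk_apply]
  abel

theorem iterRedComul_succ_list_prod (k : ℕ) {l : List A} (hne : l ≠ [])
    (hl : ∀ a ∈ l, IsPrimitiveElem R a) :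
    iterRedComul R A (k + 1) l.prod = (l.unshuffles.map fun p =>
      if p.1 ≠ [] ∧ p.2 ≠ [] then iterRedComul R A k p.1.prod ⊗ₜ[R] p.2.prod else 0).sum := by
  change TensorProduct.map (iterRedComul R A k) LinearMap.id (reducedComulHom R A l.prod) = _
  rw [reducedComulHom_list_prod hne hl, map_list_sum, List.map_map]
  congr 1
  refine List.map_congr_left fun p _ => ?_
  by_cases h : p.1 ≠ [] ∧ p.2 ≠ [] <;> simp [h]

theorem iterRedComul_list_prod_eq_zero {k : ℕ} {l : List A} (hne : l ≠ []) (hlen : l.length ≤ k)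
    (hl : ∀ a ∈ l, IsPrimitiveElem R a) : iterRedComul R A k l.prod = 0 := by
  induction k generalizing l with
  | zero => exact absurd (List.length_eq_zero_iff.1 (Nat.le_zero.1 hlen)) hne
  | succ k ih =>
    rw [iterRedComul_succ_list_prod k hne hl]
    refine List.sum_eq_zero fun t ht => ?_
    obtain ⟨p, hp, rfl⟩ := List.mem_map.1 ht
    split_ifs with h
    · have hsum := List.length_add_length_of_mem_unshuffles hp
      have hpos := List.length_pos_iff.2 h.2
      rw [ih h.1 (by omega) fun a ha => hl a ((List.fst_sublist_of_mem_unshuffles hp).subset ha),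
        TensorProduct.zero_tmul]
      -- `Tpow R A (k + 1)` is `Tpow R A k ⊗[R] A` only up to unfolding, hence the `rfl`s.
      rfl
    · rfl

theorem iterRedComul_succ_ofFn_prod {k : ℕ} (x : Fin (k + 2) → A)
    (hx : ∀ i, IsPrimitiveElem R (x i)) :
    iterRedComul R A (k + 1) (List.ofFn x).prod =
      ∑ j, iterRedComul R A k (List.ofFn (x ∘ j.succAbove)).prod ⊗ₜ[R] x j := by
  have hl : ∀ a ∈ List.ofFn x, IsPrimitiveElem R a :=
    List.forall_mem_ofFn_iff.2 hx
  rw [iterRedComul_succ_list_prod k (by simp) hl]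
  have hterm : ∀ p ∈ (List.ofFn x).unshuffles,
      (if p.1 ≠ [] ∧ p.2 ≠ [] then iterRedComul R A k p.1.prod ⊗ₜ[R] p.2.prod else 0) =
        if p.2.length = 1 then iterRedComul R A k p.1.prod ⊗ₜ[R] p.2.prod else 0 := by
    intro p hp
    have hlen := (List.length_add_length_of_mem_unshuffles hp).trans List.length_ofFn
    simp only [ne_eq, ← List.length_eq_zero_iff]
    split_ifs with h h2 <;> try first | rfl | omega
    rw [iterRedComul_list_prod_eq_zero (List.length_eq_zero_iff.not.1 h.1) (by omega)
      fun a ha => hl a ((List.fst_sublist_of_mem_unshuffles hp).subset ha),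
      TensorProduct.zero_tmul]
  rw [List.map_congr_left hterm, List.sum_unshuffles_ofFn_ite_length_snd_eq_one]
  simp only [List.prod_singleton]
  rfl

end Bialgebra

theorem stmt4_general {R : Type u} {A : Type v} [CommRing R] [Ring A] [Bialgebra R A]
    (k : ℕ) (x : Fin (k + 1) → A) (hx : ∀ i, IsPrimitiveElem R (x i)) :
    iterRedComul R A k (List.ofFn x).prod =
      ∑ σ : Equiv.Perm (Fin (k + 1)), tensorOfFn R A k (fun i => x (σ i)) := by
  induction k with
  | zero =>
    rw [List.ofFn_succ, List.ofFn_zero, List.prod_singleton]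
    change x 0 = ∑ σ : Equiv.Perm (Fin 1), x (σ 0)
    simp
  | succ k ih =>
    rw [iterRedComul_succ_ofFn_prod x hx, Equiv.Perm.sum_eq_sum_finSnoc]
    refine Finset.sum_congr rfl fun j _ => ?_
    rw [ih (x ∘ j.succAbove) fun i => hx _, TensorProduct.sum_tmul]
    refine Finset.sum_congr rfl fun σ _ => ?_
    simp only [tensorOfFn, Equiv.Perm.finSnoc_castSucc, Equiv.Perm.finSnoc_last]
    rfl

/-- For primitive elements `x₁, …, x_{k+1}` of a bialgebra `A`,
`Δ̄^k(x₁ ⋯ x_{k+1}) = Σ_{σ ∈ S_{k+1}} x_{σ(1)} ⊗ ⋯ ⊗ x_{σ(k+1)}`. -/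
theorem stmt4 {R : Type u} {A : Type v} [CommRing R] [Ring A] [Bialgebra R A]
    (k : ℕ) (hk : 1 ≤ k) (x : Fin (k + 1) → A) (hx : ∀ i, IsPrimitiveElem R (x i)) :
    iterRedComul R A k (List.ofFn x).prod =
      ∑ σ : Equiv.Perm (Fin (k + 1)), tensorOfFn R A k (fun i => x (σ i)) :=
  stmt4_general k x hx
end

section
/- Path sums of an edge labelling that vanishes on squares and hexagons are path-independent: let G = G_1 □ ⋯ □ G_m be a box product of permutographs, let M be an additive commutative group, and let φ assign to each ordered pair (v, w) of adjacent vertices of G an element φ(v,w) ∈ M with φ(w,v) = −φ(v,w). Assume that for every closed walk in G of length 4 and every closed walk in G of length 6, the sum of φ over its consecutive directed edges is zero. Then the sum of φ over the consecutive directed edges of every closed walk in G is zero; consequently, for any two walks in G with the same starting vertex and the same ending vertex, the sums of φ along their edges agree. -/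
def permutograph (N s : ℕ) : SimpleGraph (Fin N → Fin s) where
  Adj v w := ∃ (i : ℕ) (h : i + 1 < N),
      v ⟨i, Nat.lt_of_succ_lt h⟩ ≠ v ⟨i + 1, h⟩ ∧
      w = v ∘ Equiv.swap ⟨i, Nat.lt_of_succ_lt h⟩ ⟨i + 1, h⟩
  symm := by
    constructor
    rintro v w ⟨i, h, hne, rfl⟩
    refine ⟨i, h, ?_, ?_⟩
    · simpa using hne.symm
    · funext k
      simp
  loopless := by
    constructor
    rintro v ⟨i, h, hne, hv⟩
    apply hne
    conv_lhs => rw [hv]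
    simp

def boxProdFamily {ι : Type*} {V : ι → Type*} (G : ∀ i, SimpleGraph (V i)) :
    SimpleGraph (∀ i, V i) where
  Adj a b := ∃ i, (G i).Adj (a i) (b i) ∧ ∀ j, j ≠ i → a j = b j
  symm := by
    constructor
    rintro a b ⟨i, hadj, hj⟩
    exact ⟨i, hadj.symm, fun j hne => (hj j hne).symm⟩
  loopless := by
    constructor
    rintro a ⟨i, hadj, -⟩
    exact (G i).loopless.irrefl (a i) hadj

/-!
Orient every edge towards the larger value of `height v = ∑ j, ∑ k, k * v j k`: swapping
positions `i, i + 1` of a word `a` changes its weight by `a i - a (i + 1)`, so adjacent vertices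
have different heights. Define a potential `F` by descending along an arbitrarily chosen lower
neighbour. By induction on the height, `F w = F v + φ (v, w)` for *every* lower neighbour `v` of
`w`: two lower neighbours of `w` undo swaps at two ascents of `w`, which either commute and close
up below in a square, or overlap (`a i < a (i + 1) < a (i + 2)`) and close up in a hexagon by the
braid relation; `φ` sums to zero around both. Hence the sum along any walk telescopes to
`F (end) - F (start)`.
-/

namespace SimpleGraph

variable {V M : Type*} [AddCommGroup M] {G : SimpleGraph V}

namespace Walk

variable (φ : G.Dart → M) (ht : V → ℕ)

def labelSum {u v : V} (p : G.Walk u v) : M := (p.darts.map φ).sum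

@[simp]
lemma labelSum_nil {u : V} : (nil : G.Walk u u).labelSum φ = 0 := rfl

@[simp]
lemma labelSum_cons {u v w : V} (huv : G.Adj u v) (p : G.Walk v w) :
    (cons huv p).labelSum φ = φ ⟨(u, v), huv⟩ + p.labelSum φ := by
  simp [labelSum]

@[simp]
lemma labelSum_append {u v w : V} (p : G.Walk u v) (q : G.Walk v w) :
    (p.append q).labelSum φ = p.labelSum φ + q.labelSum φ := by
  simp [labelSum]

@[simp]
lemma labelSum_concat {u v w : V} (p : G.Walk u v) (hvw : G.Adj v w) :
    (p.concat hvw).labelSum φ = p.labelSum φ + φ ⟨(v, w), hvw⟩ := by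
  simp [concat]

lemma labelSum_reverse {φ : G.Dart → M} (hanti : ∀ d, φ d.symm = -φ d) {u v : V}
    (p : G.Walk u v) : p.reverse.labelSum φ = -p.labelSum φ := by
  induction p with
  | nil => simp
  | cons huv p ih =>
    have hsymm : φ ⟨(_, _), huv.symm⟩ = -φ ⟨(_, _), huv⟩ := hanti ⟨(_, _), huv⟩
    rw [reverse_cons, labelSum_append, ih, labelSum_cons, labelSum_cons, labelSum_nil, hsymm]
    abel

def IsAscending {u v : V} (p : G.Walk u v) : Prop := ∀ d ∈ p.darts, ht d.fst < ht d.snd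

@[simp]
lemma isAscending_nil {u : V} : (nil : G.Walk u u).IsAscending ht := by
  simp [IsAscending]

@[simp]
lemma isAscending_cons {u v w : V} (huv : G.Adj u v) (p : G.Walk v w) :
    (cons huv p).IsAscending ht ↔ ht u < ht v ∧ p.IsAscending ht := by
  simp [IsAscending]

lemma IsAscending.le {ht : V → ℕ} {u v : V} {p : G.Walk u v} (hp : p.IsAscending ht) :
    ht u ≤ ht v := by
  induction p with
  | nil => rfl
  | cons huv p ih =>
    rw [isAscending_cons] at hp
    exact hp.1.le.trans (ih hp.2)

@[simp]
lemma isAscending_copy {u v u' v' : V} (p : G.Walk u v) (hu : u = u') (hv : v = v') :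
    (p.copy hu hv).IsAscending ht ↔ p.IsAscending ht := by
  subst hu hv; rfl

end Walk

variable (ht : V → ℕ) (φ : G.Dart → M)

def VanishesOnLowerDiamonds : Prop :=
  ∀ ⦃v v' w : V⦄ (hv : G.Adj v w) (hv' : G.Adj v' w), ht v < ht w → ht v' < ht w → v ≠ v' →
    ∃ (z : V) (p : G.Walk z v) (q : G.Walk z v'), p.IsAscending ht ∧ q.IsAscending ht ∧
      ((p.concat hv).append (q.concat hv').reverse).labelSum φ = 0

open Classical in
noncomputable def potential (w : V) : M :=
  if hw : ∃ v, G.Adj v w ∧ ht v < ht w then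
    potential hw.choose + φ ⟨(hw.choose, w), hw.choose_spec.1⟩
  else 0
termination_by ht w
decreasing_by exact hw.choose_spec.2

variable {ht φ}

lemma eq_add_labelSum_of_isAscending {F : V → M} {H : ℕ}
    (hF : ∀ ⦃a b⦄ (hab : G.Adj a b), ht a < ht b → ht b < H → F b = F a + φ ⟨(a, b), hab⟩)
    {u v : V} {p : G.Walk u v} (hp : p.IsAscending ht) (hv : ht v < H) :
    F v = F u + p.labelSum φ := by
  induction p with
  | nil => simp
  | cons hua p ih =>
    rw [Walk.isAscending_cons] at hp
    rw [ih hp.2 hv, hF hua hp.1 (hp.2.le.trans_lt hv), Walk.labelSum_cons, add_assoc]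

lemma potential_eq_add_of_lt (hanti : ∀ d, φ d.symm = -φ d)
    (hdiamond : VanishesOnLowerDiamonds ht φ) {v w : V} (hvw : G.Adj v w) (hlt : ht v < ht w) :
    potential ht φ w = potential ht φ v + φ ⟨(v, w), hvw⟩ := by
  induction hH : ht w using Nat.strong_induction_on generalizing v w with
  | _ H ih =>
    have hw : ∃ v, G.Adj v w ∧ ht v < ht w := ⟨v, hvw, hlt⟩
    set v₀ := hw.choose
    have hv₀ : G.Adj v₀ w ∧ ht v₀ < ht w := hw.choose_spec
    have hdef : potential ht φ w = potential ht φ v₀ + φ ⟨(v₀, w), hv₀.1⟩ := by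
      rw [potential, dif_pos hw]
    by_cases hv₀v : v₀ = v
    · subst hv₀v; exact hdef
    obtain ⟨z, p, q, hp, hq, hcycle⟩ := hdiamond hv₀.1 hvw hv₀.2 hlt hv₀v
    have hlow : ∀ ⦃a b⦄ (hab : G.Adj a b), ht a < ht b → ht b < ht w →
        potential ht φ b = potential ht φ a + φ ⟨(a, b), hab⟩ :=
      fun a b hab hab' hb => ih (ht b) (hH ▸ hb) hab hab' rfl
    have hsum : (p.concat hv₀.1).labelSum φ = (q.concat hvw).labelSum φ := by
      rwa [Walk.labelSum_append, Walk.labelSum_reverse hanti, add_neg_eq_zero] at hcycle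
    rw [Walk.labelSum_concat, Walk.labelSum_concat] at hsum
    calc potential ht φ w = potential ht φ z + (p.labelSum φ + φ ⟨(v₀, w), _⟩) := by
          rw [hdef, eq_add_labelSum_of_isAscending hlow hp hv₀.2, add_assoc]
      _ = potential ht φ v + φ ⟨(v, w), hvw⟩ := by
          rw [hsum, eq_add_labelSum_of_isAscending hlow hq hlt, add_assoc]

theorem labelSum_eq_potential_sub (hanti : ∀ d, φ d.symm = -φ d)
    (hgraded : ∀ ⦃v w⦄, G.Adj v w → ht v ≠ ht w) (hdiamond : VanishesOnLowerDiamonds ht φ)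
    {u v : V} (p : G.Walk u v) : p.labelSum φ = potential ht φ v - potential ht φ u := by
  induction p with
  | nil => simp
  | @cons u a v hua p ih =>
    have hstep : φ ⟨(u, a), hua⟩ = potential ht φ a - potential ht φ u := by
      rcases (hgraded hua).lt_or_gt with hlt | hgt
      · rw [potential_eq_add_of_lt hanti hdiamond hua hlt]; abel
      · rw [potential_eq_add_of_lt hanti hdiamond hua.symm hgt]
        have hsymm : φ ⟨(a, u), hua.symm⟩ = -φ ⟨(u, a), hua⟩ := hanti ⟨(u, a), hua⟩
        rw [hsymm]; abel
    rw [Walk.labelSum_cons, ih, hstep]; abel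

end SimpleGraph

namespace Permutograph

section Words

variable {n s : ℕ}

def swapAt (a : Fin n → Fin s) (i : ℕ) (hi : i + 1 < n) : Fin n → Fin s :=
  a ∘ Equiv.swap ⟨i, Nat.lt_of_succ_lt hi⟩ ⟨i + 1, hi⟩

lemma swapAt_apply (a : Fin n → Fin s) {i : ℕ} (hi : i + 1 < n) (k : ℕ) (hk : k < n) :
    swapAt a i hi ⟨k, hk⟩ =
      if k = i then a ⟨i + 1, hi⟩ else if k = i + 1 then a ⟨i, Nat.lt_of_succ_lt hi⟩
      else a ⟨k, hk⟩ := by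
  simp only [swapAt, Function.comp_apply, Equiv.swap_apply_def, Fin.mk.injEq]
  split_ifs <;> rfl

lemma swapAt_comm (a : Fin n → Fin s) {i i' : ℕ} (hi : i + 1 < n) (hi' : i' + 1 < n)
    (hfar : i + 1 < i' ∨ i' + 1 < i) :
    swapAt (swapAt a i hi) i' hi' = swapAt (swapAt a i' hi') i hi := by
  funext ⟨k, hk⟩
  simp only [swapAt_apply]
  split_ifs <;> first | rfl | omega

lemma swapAt_braid (a : Fin n → Fin s) {i : ℕ} (hi : i + 1 < n) (hi' : i + 1 + 1 < n) :
    swapAt (swapAt (swapAt a i hi) (i + 1) hi') i hi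
      = swapAt (swapAt (swapAt a (i + 1) hi') i hi) (i + 1) hi' := by
  funext ⟨k, hk⟩
  simp only [swapAt_apply]
  split_ifs <;> first | rfl | omega

def weight (a : Fin n → Fin s) : ℕ := ∑ k : Fin n, (k : ℕ) * (a k : ℕ)

lemma weight_swapAt (a : Fin n → Fin s) {i : ℕ} (hi : i + 1 < n) :
    weight (swapAt a i hi) + a ⟨i + 1, hi⟩ = weight a + a ⟨i, Nat.lt_of_succ_lt hi⟩ := by
  set i₀ : Fin n := ⟨i, Nat.lt_of_succ_lt hi⟩
  set i₁ : Fin n := ⟨i + 1, hi⟩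
  set σ := Equiv.swap i₀ i₁
  have hpoint : ∀ k, (σ k : ℕ) * a k + (if k = i₁ then (a k : ℕ) else 0)
      = k * a k + (if k = i₀ then (a k : ℕ) else 0) := by
    intro k
    rcases eq_or_ne k i₀ with rfl | h₀
    · simp [σ, i₁, i₀, add_mul]
    rcases eq_or_ne k i₁ with rfl | h₁
    · simp [σ, i₁, i₀, add_mul]
    · simp [σ, Equiv.swap_apply_of_ne_of_ne h₀ h₁, h₀, h₁]
  have hreindex : weight (swapAt a i hi) = ∑ k, (σ k : ℕ) * a k := by
    rw [← Equiv.sum_comp σ]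
    simp only [σ, Equiv.swap_apply_self]
    rfl
  have hsum := Finset.sum_congr rfl fun k (_ : k ∈ Finset.univ) => hpoint k
  rw [hreindex]
  simpa [Finset.sum_add_distrib, weight] using hsum

end Words

section Product

open SimpleGraph

variable {ι : Type*} [DecidableEq ι] {N s : ι → ℕ}

abbrev permutographProd (N s : ι → ℕ) : SimpleGraph (∀ j, Fin (N j) → Fin (s j)) :=
  boxProdFamily fun j => permutograph (N j) (s j)

def flipAt (v : ∀ j, Fin (N j) → Fin (s j)) (j : ι) (i : ℕ) (hi : i + 1 < N j) :
    ∀ j, Fin (N j) → Fin (s j) :=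
  Function.update v j (swapAt (v j) i hi)

variable {v w : ∀ j, Fin (N j) → Fin (s j)} {j j' : ι} {i i' : ℕ}

@[simp]
lemma flipAt_apply_self (hi : i + 1 < N j) : flipAt v j i hi j = swapAt (v j) i hi :=
  Function.update_self j _ v

lemma flipAt_apply_of_ne (hi : i + 1 < N j) {k : ι} (hk : k ≠ j) : flipAt v j i hi k = v k :=
  Function.update_of_ne hk _ v

lemma flipAt_apply_of_independent (hi : i + 1 < N j) {k : ℕ} (hk : k < N j')
    (hind : j ≠ j' ∨ (k ≠ i ∧ k ≠ i + 1)) : flipAt v j i hi j' ⟨k, hk⟩ = v j' ⟨k, hk⟩ := by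
  by_cases hj : j' = j
  · subst hj
    have hk' : k ≠ i ∧ k ≠ i + 1 := hind.resolve_left (not_not.2 rfl)
    simp [swapAt_apply, hk'.1, hk'.2]
  · rw [flipAt_apply_of_ne hi hj]

lemma flipAt_comm (hi : i + 1 < N j) (hi' : i' + 1 < N j')
    (hind : j ≠ j' ∨ i + 1 < i' ∨ i' + 1 < i) :
    flipAt (flipAt v j i hi) j' i' hi' = flipAt (flipAt v j' i' hi') j i hi := by
  by_cases hj : j = j'
  · subst hj
    simp only [flipAt, Function.update_self, Function.update_idem]
    rw [swapAt_comm _ _ _ (hind.resolve_left (not_not.2 rfl))]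
  · rw [flipAt, flipAt_apply_of_ne hi (Ne.symm hj), flipAt, flipAt, flipAt_apply_of_ne hi' hj,
      flipAt, Function.update_comm hj]

lemma flipAt_braid (hi : i + 1 < N j) (hi' : i + 1 + 1 < N j) :
    flipAt (flipAt (flipAt v j i hi) j (i + 1) hi') j i hi
      = flipAt (flipAt (flipAt v j (i + 1) hi') j i hi) j (i + 1) hi' := by
  simp only [flipAt, Function.update_self, Function.update_idem]
  rw [swapAt_braid]

lemma permutographProd_adj_iff :
    (permutographProd N s).Adj v w ↔ ∃ (j : ι) (i : ℕ) (hi : i + 1 < N j),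
      v j ⟨i, Nat.lt_of_succ_lt hi⟩ ≠ v j ⟨i + 1, hi⟩ ∧ w = flipAt v j i hi := by
  constructor
  · rintro ⟨j, ⟨i, hi, hne, hw⟩, hother⟩
    refine ⟨j, i, hi, hne, funext fun k => ?_⟩
    by_cases hk : k = j
    · subst hk
      rw [flipAt_apply_self, hw, swapAt]
    · rw [flipAt_apply_of_ne hi hk, hother k hk]
  · rintro ⟨j, i, hi, hne, rfl⟩
    exact ⟨j, ⟨i, hi, hne, by rw [flipAt_apply_self, swapAt]⟩,
      fun k hk => (flipAt_apply_of_ne hi hk).symm⟩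

lemma adj_flipAt_of_lt {hi : i + 1 < N j}
    (hlt : v j ⟨i, Nat.lt_of_succ_lt hi⟩ < v j ⟨i + 1, hi⟩) :
    (permutographProd N s).Adj (flipAt v j i hi) v :=
  (permutographProd_adj_iff.2 ⟨j, i, hi, hlt.ne, rfl⟩).symm

variable [Fintype ι]

def height (v : ∀ j, Fin (N j) → Fin (s j)) : ℕ := ∑ j, weight (v j)

lemma height_update (b : Fin (N j) → Fin (s j)) :
    height (Function.update v j b) + weight (v j) = height v + weight b := by
  have hsplit := Finset.sum_update_of_mem (Finset.mem_univ j) (fun k => weight (v k)) (weight b)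
  have hsplit' := Finset.sum_update_of_mem (Finset.mem_univ j) (fun k => weight (v k))
    (weight (v j))
  simp only [Function.update_eq_self] at hsplit'
  simp only [height, Function.apply_update (fun k => @weight (N k) (s k)), hsplit, hsplit']
  abel

lemma height_flipAt (hi : i + 1 < N j) :
    height (flipAt v j i hi) + v j ⟨i + 1, hi⟩ = height v + v j ⟨i, Nat.lt_of_succ_lt hi⟩ := by
  have hupdate := height_update (v := v) (swapAt (v j) i hi)
  have hswap := weight_swapAt (v j) hi
  rw [flipAt]
  omega

lemma height_flipAt_lt {hi : i + 1 < N j}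
    (hlt : v j ⟨i, Nat.lt_of_succ_lt hi⟩ < v j ⟨i + 1, hi⟩) :
    height (flipAt v j i hi) < height v := by
  have := height_flipAt (v := v) hi
  omega

lemma height_ne_of_adj (hvw : (permutographProd N s).Adj v w) :
    height v ≠ height w := by
  obtain ⟨j, i, hi, hne, rfl⟩ := permutographProd_adj_iff.1 hvw
  have := height_flipAt (v := v) hi
  omega

lemma exists_ascent_of_adj_of_height_lt
    (hvw : (permutographProd N s).Adj v w) (hlt : height v < height w) :
    ∃ (j : ι) (i : ℕ) (hi : i + 1 < N j),
      w j ⟨i, Nat.lt_of_succ_lt hi⟩ < w j ⟨i + 1, hi⟩ ∧ v = flipAt w j i hi := by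
  obtain ⟨j, i, hi, hne, rfl⟩ := permutographProd_adj_iff.1 hvw.symm
  have := height_flipAt (v := w) hi
  exact ⟨j, i, hi, by omega, rfl⟩

lemma exists_ascending_square {hi : i + 1 < N j} {hi' : i' + 1 < N j'}
    (hasc : w j ⟨i, Nat.lt_of_succ_lt hi⟩ < w j ⟨i + 1, hi⟩)
    (hasc' : w j' ⟨i', Nat.lt_of_succ_lt hi'⟩ < w j' ⟨i' + 1, hi'⟩)
    (hind : j ≠ j' ∨ i + 1 < i' ∨ i' + 1 < i) :
    ∃ (z : _) (p : (permutographProd N s).Walk z (flipAt w j i hi))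
      (q : (permutographProd N s).Walk z (flipAt w j' i' hi')),
      p.IsAscending height ∧ q.IsAscending height ∧ p.length = 1 ∧ q.length = 1 := by
  have hasc₁ :
      flipAt w j i hi j' ⟨i', Nat.lt_of_succ_lt hi'⟩ < flipAt w j i hi j' ⟨i' + 1, hi'⟩ := by
    rwa [flipAt_apply_of_independent _ _ (hind.imp_right (by omega)),
      flipAt_apply_of_independent _ _ (hind.imp_right (by omega))]
  have hasc₂ :
      flipAt w j' i' hi' j ⟨i, Nat.lt_of_succ_lt hi⟩ < flipAt w j' i' hi' j ⟨i + 1, hi⟩ := by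
    rwa [flipAt_apply_of_independent _ _ (hind.imp Ne.symm (by omega)),
      flipAt_apply_of_independent _ _ (hind.imp Ne.symm (by omega))]
  refine ⟨_, (adj_flipAt_of_lt hasc₁).toWalk,
    (adj_flipAt_of_lt hasc₂).toWalk.copy (flipAt_comm hi hi' hind).symm rfl, ?_, ?_, rfl,
    by simp⟩
  · simpa using height_flipAt_lt hasc₁
  · simpa using height_flipAt_lt hasc₂

lemma exists_ascending_hexagon {hi : i + 1 < N j} {hi' : i + 1 + 1 < N j}
    (hasc : w j ⟨i, Nat.lt_of_succ_lt hi⟩ < w j ⟨i + 1, hi⟩)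
    (hasc' : w j ⟨i + 1, hi⟩ < w j ⟨i + 1 + 1, hi'⟩) :
    ∃ (z : _) (p : (permutographProd N s).Walk z (flipAt w j i hi))
      (q : (permutographProd N s).Walk z (flipAt w j (i + 1) hi')),
      p.IsAscending height ∧ q.IsAscending height ∧ p.length = 2 ∧ q.length = 2 := by
  set v := flipAt w j i hi
  set v' := flipAt w j (i + 1) hi'
  have hv : v j ⟨i + 1, hi⟩ < v j ⟨i + 1 + 1, hi'⟩ := by
    simp only [v, flipAt_apply_self, swapAt_apply]
    split_ifs <;> omega
  have hu : flipAt v j (i + 1) hi' j ⟨i, Nat.lt_of_succ_lt hi⟩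
      < flipAt v j (i + 1) hi' j ⟨i + 1, hi⟩ := by
    simp only [v, flipAt_apply_self, swapAt_apply]
    split_ifs <;> omega
  have hv' : v' j ⟨i, Nat.lt_of_succ_lt hi⟩ < v' j ⟨i + 1, hi⟩ := by
    simp only [v', flipAt_apply_self, swapAt_apply]
    split_ifs <;> omega
  have hu' : flipAt v' j i hi j ⟨i + 1, hi⟩ < flipAt v' j i hi j ⟨i + 1 + 1, hi'⟩ := by
    simp only [v', flipAt_apply_self, swapAt_apply]
    split_ifs <;> omega
  refine ⟨_, .cons (adj_flipAt_of_lt hu) (adj_flipAt_of_lt hv).toWalk,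
    (Walk.cons (adj_flipAt_of_lt hu') (adj_flipAt_of_lt hv').toWalk).copy
      (flipAt_braid hi hi').symm rfl, ?_, ?_, rfl, by simp⟩
  · simpa using ⟨height_flipAt_lt hu, height_flipAt_lt hv⟩
  · simpa using ⟨height_flipAt_lt hu', height_flipAt_lt hv'⟩

lemma exists_ascending_diamond {v' : ∀ j, Fin (N j) → Fin (s j)}
    (hv : (permutographProd N s).Adj v w) (hv' : (permutographProd N s).Adj v' w)
    (hlt : height v < height w) (hlt' : height v' < height w) (hne : v ≠ v') :
    ∃ (z : _) (p : (permutographProd N s).Walk z v) (q : (permutographProd N s).Walk z v'),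
      p.IsAscending height ∧ q.IsAscending height ∧ p.length = q.length ∧
      (p.length = 1 ∨ p.length = 2) := by
  obtain ⟨j, i, hi, hasc, rfl⟩ := exists_ascent_of_adj_of_height_lt hv hlt
  obtain ⟨j', i', hi', hasc', rfl⟩ := exists_ascent_of_adj_of_height_lt hv' hlt'
  by_cases hind : j ≠ j' ∨ i + 1 < i' ∨ i' + 1 < i
  · obtain ⟨z, p, q, hp, hq, hpl, hql⟩ := exists_ascending_square hasc hasc' hind
    exact ⟨z, p, q, hp, hq, hpl.trans hql.symm, .inl hpl⟩
  push Not at hind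
  obtain ⟨rfl, hclose⟩ := hind
  rcases (by omega : i' = i + 1 ∨ i = i' + 1 ∨ i = i') with rfl | rfl | rfl
  · obtain ⟨z, p, q, hp, hq, hpl, hql⟩ := exists_ascending_hexagon hasc hasc'
    exact ⟨z, p, q, hp, hq, hpl.trans hql.symm, .inr hpl⟩
  · obtain ⟨z, p, q, hp, hq, hpl, hql⟩ := exists_ascending_hexagon hasc' hasc
    exact ⟨z, q, p, hq, hp, hql.trans hpl.symm, .inr hql⟩
  · exact absurd rfl hne

lemma vanishesOnLowerDiamonds_permutographProd {M : Type*} [AddCommGroup M]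
    {φ : (permutographProd N s).Dart → M}
    (h4 : ∀ u (c : (permutographProd N s).Walk u u), c.length = 4 → c.labelSum φ = 0)
    (h6 : ∀ u (c : (permutographProd N s).Walk u u), c.length = 6 → c.labelSum φ = 0) :
    VanishesOnLowerDiamonds height φ := by
  intro v v' w hv hv' hlt hlt' hne
  obtain ⟨z, p, q, hp, hq, hlen, hshape⟩ := exists_ascending_diamond hv hv' hlt hlt' hne
  refine ⟨z, p, q, hp, hq, ?_⟩
  have hcycle : ((p.concat hv).append (q.concat hv').reverse).length = 2 * p.length + 2 := by
    simp [hlen]; omega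
  rcases hshape with h1 | h2
  · exact h4 _ _ (by omega)
  · exact h6 _ _ (by omega)

end Product

end Permutograph

theorem stmt11_general (m : ℕ) (N s : Fin m → ℕ)
    {M : Type*} [AddCommGroup M]
    (φ : (boxProdFamily fun j => permutograph (N j) (s j)).Dart → M)
    (hanti : ∀ d, φ d.symm = -φ d)
    (h4 : ∀ (u : ∀ j : Fin m, Fin (N j) → Fin (s j))
      (w : (boxProdFamily fun j => permutograph (N j) (s j)).Walk u u),
      w.length = 4 → (w.darts.map φ).sum = 0)
    (h6 : ∀ (u : ∀ j : Fin m, Fin (N j) → Fin (s j))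
      (w : (boxProdFamily fun j => permutograph (N j) (s j)).Walk u u),
      w.length = 6 → (w.darts.map φ).sum = 0) :
    (∀ (u : ∀ j : Fin m, Fin (N j) → Fin (s j))
      (w : (boxProdFamily fun j => permutograph (N j) (s j)).Walk u u),
      (w.darts.map φ).sum = 0) ∧
    (∀ (u v : ∀ j : Fin m, Fin (N j) → Fin (s j))
      (w₁ w₂ : (boxProdFamily fun j => permutograph (N j) (s j)).Walk u v),
      (w₁.darts.map φ).sum = (w₂.darts.map φ).sum) := by
  have hpotential {u v} (p : (Permutograph.permutographProd N s).Walk u v) :=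
    SimpleGraph.labelSum_eq_potential_sub hanti (fun _ _ => Permutograph.height_ne_of_adj)
      (Permutograph.vanishesOnLowerDiamonds_permutographProd h4 h6) p
  refine ⟨fun u w => ?_, fun u v w₁ w₂ => ?_⟩
  · exact (hpotential w).trans (sub_self _)
  · exact (hpotential w₁).trans (hpotential w₂).symm

/-- Path sums of an antisymmetric edge labelling of a box product of
permutographs that vanishes on closed walks of length `4` and `6` are path-independent:
the sum of the labels along every closed walk vanishes, and consequently any two walks with
the same endpoints have the same label sum. -/
theorem stmt11 (m : ℕ) (N s : Fin m → ℕ) (hN : ∀ j, 1 ≤ N j) (hs : ∀ j, 1 ≤ s j)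
    {M : Type*} [AddCommGroup M]
    (φ : (boxProdFamily fun j => permutograph (N j) (s j)).Dart → M)
    (hanti : ∀ d, φ d.symm = -φ d)
    (h4 : ∀ (u : ∀ j : Fin m, Fin (N j) → Fin (s j))
      (w : (boxProdFamily fun j => permutograph (N j) (s j)).Walk u u),
      w.length = 4 → (w.darts.map φ).sum = 0)
    (h6 : ∀ (u : ∀ j : Fin m, Fin (N j) → Fin (s j))
      (w : (boxProdFamily fun j => permutograph (N j) (s j)).Walk u u),
      w.length = 6 → (w.darts.map φ).sum = 0) :
    (∀ (u : ∀ j : Fin m, Fin (N j) → Fin (s j))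
      (w : (boxProdFamily fun j => permutograph (N j) (s j)).Walk u u),
      (w.darts.map φ).sum = 0) ∧
    (∀ (u v : ∀ j : Fin m, Fin (N j) → Fin (s j))
      (w₁ w₂ : (boxProdFamily fun j => permutograph (N j) (s j)).Walk u v),
      (w₁.darts.map φ).sum = (w₂.darts.map φ).sum) :=
  stmt11_general m N s φ hanti h4 h6
end
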